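/- Let a, b be non-zero rational numbers and η, θ roots of unity such that α = aη + bθ has degree 1 or 2 over ℚ. Then ℚ(α) is one of the fields ℚ, ℚ(i), ℚ(√−2), ℚ(√−3), ℚ(√2), ℚ(√3), ℚ(√5). -/

import Mathlib

/-!
If `α = a η + b θ` is real, then `α (a η - b conj θ) = a² - b²`, so `Re η` and `Re θ` lie in
`ℚ(α)`. Hence `η` and `θ` have degree at most `4`, their orders divide `8`, `10` or `12`, and
their real parts lie in `ℚ(√2)`, `ℚ(√5)` or `ℚ(√3)`. As `ℚ(α)` has prime degree it is `ℚ` or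
`ℚ(Re η)` or `ℚ(Re θ)`.

If `α` is not real, then `α conj α ∈ ℚ` gives `w + conj w ∈ ℚ` for `w = η conj θ`, so `w¹² = 1`.
Writing `α = (a w + b) θ = (a + b conj w) η` shows that `η` and `θ` have degree at most `4`, and
comparing exponents puts them both in `μ₈` or both in `μ₁₂`. Their imaginary parts then lie in
`ℚ + ℚ√m` with `m = 2` or `3`; since `(Im α)²` is rational, `Im α` is a rational multiple of `1`
or of `√m`, so `ℚ(α) = ℚ(i)` or `ℚ(i√m)`.
-/

/-- A complex number is a root of unity if some positive power of it equals 1. -/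
def IsRootOfUnity (z : ℂ) : Prop := ∃ n : ℕ, 0 < n ∧ z ^ n = 1

open Polynomial IntermediateField Module ComplexConjugate
open scoped Nat

namespace IntermediateField

variable {K L : Type*} [Field K] [Field L] [Algebra K L]

theorem natDegree_minpoly_le_finrank_mul (F : IntermediateField K L) [FiniteDimensional K F]
    {z : L} {P : F[X]} (hP : P ≠ 0) (hz : aeval z P = 0) :
    (minpoly K z).natDegree ≤ finrank K F * P.natDegree := by
  have hint : IsIntegral F z := (show IsAlgebraic F z from ⟨P, hP, hz⟩).isIntegral
  let E := F⟮z⟯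
  have : FiniteDimensional F E := adjoin.finiteDimensional hint
  have : Module.Free F E := .of_divisionRing _ _
  have : FiniteDimensional K E := Module.Finite.trans F _
  have : FiniteDimensional K (E.restrictScalars K) := ‹FiniteDimensional K E›
  calc (minpoly K z).natDegree
      = (minpoly K (⟨z, mem_adjoin_simple_self F z⟩ : E.restrictScalars K)).natDegree := by
        rw [minpoly_eq]
    _ ≤ finrank K (E.restrictScalars K) := minpoly.natDegree_le _
    _ = finrank K F * finrank F E := (finrank_mul_finrank K F E).symm
    _ ≤ finrank K F * P.natDegree := by
        rw [adjoin.finrank hint]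
        exact Nat.mul_le_mul_left _
          (natDegree_le_natDegree (minpoly.degree_le_of_ne_zero F z hP hz))

theorem adjoin_simple_eq_bot_or_eq_of_mem {F : IntermediateField K L} [FiniteDimensional K F]
    (hF : (finrank K F).Prime) {x : L} (hx : x ∈ F) : K⟮x⟯ = ⊥ ∨ K⟮x⟯ = F := by
  have hle : K⟮x⟯ ≤ F := adjoin_simple_le_iff.2 hx
  rcases hF.eq_one_or_self_of_dvd _ (finrank_dvd_of_le_right hle) with h | h
  · exact Or.inl (finrank_eq_one_iff.1 h)
  · exact Or.inr (eq_of_le_of_finrank_eq hle h)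

theorem adjoin_simple_algebraMap_add_mul {u v : K} (hv : v ≠ 0) (g : L) :
    K⟮algebraMap K L u + algebraMap K L v * g⟯ = K⟮g⟯ := by
  refine le_antisymm (adjoin_simple_le_iff.2 ?_) (adjoin_simple_le_iff.2 ?_)
  · exact add_mem (algebraMap_mem _ u) (mul_mem (algebraMap_mem _ v) (mem_adjoin_simple_self K g))
  · set α := algebraMap K L u + algebraMap K L v * g
    have hg : g = (α - algebraMap K L u) / algebraMap K L v := by
      rw [eq_div_iff ((_root_.map_ne_zero _).2 hv)]; ring
    rw [hg]
    exact div_mem (sub_mem (mem_adjoin_simple_self K α) (algebraMap_mem _ u)) (algebraMap_mem _ v)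

end IntermediateField

theorem minpoly.exists_sq_add_mul_add_eq_zero {K L : Type*} [Field K] [Field L] [Algebra K L]
    {x : L} (hx : IsIntegral K x) (h : (minpoly K x).natDegree = 2) :
    ∃ p q : K, x ^ 2 + algebraMap K L p * x + algebraMap K L q = 0 := by
  refine ⟨(minpoly K x).coeff 1, (minpoly K x).coeff 0, ?_⟩
  have := minpoly.aeval K x
  rw [(minpoly.monic hx).as_sum, h] at this
  simp only [map_add, aeval_X_pow, aeval_C, aeval_X, Finset.sum_range_succ,
    Finset.sum_range_zero, map_mul, pow_zero, pow_one, mul_one, zero_add] at this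
  linear_combination this

theorem Nat.dvd_120_of_totient_le_four {n : ℕ} (hn : 0 < n) (h : φ n ≤ 4) : n ∣ 120 := by
  refine (Nat.dvd_iff_prime_pow_dvd_dvd 120 n).2 fun p k hp hpk => ?_
  have hle : φ (p ^ k) ≤ 4 := (Nat.le_of_dvd (totient_pos.2 hn) (totient_dvd_of_dvd hpk)).trans h
  -- `φ (p ^ k) ≥ p ^ k / 2`, so only the prime powers up to `8` can occur
  have hsmall : p ^ k ≤ 8 := by
    cases k with
    | zero => simp
    | succ j =>
      rw [totient_prime_pow_succ hp] at hle
      obtain ⟨q, rfl⟩ : ∃ q, p = q + 2 := ⟨p - 2, by have := hp.two_le; omega⟩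
      rw [show q + 2 - 1 = q + 1 by omega] at hle
      rw [pow_succ]
      nlinarith [Nat.one_le_two_pow (n := j), Nat.pow_le_pow_left (show 2 ≤ q + 2 by omega) j]
  have key : ∀ m ≤ 8, 0 < m → φ m ≤ 4 → m ∣ 120 := by decide
  exact key _ hsmall (pow_pos hp.pos k) hle

theorem Nat.dvd_eight_or_dvd_ten_or_dvd_twelve_of_totient_le_four {n : ℕ} (hn : 0 < n)
    (h : φ n ≤ 4) : n ∣ 8 ∨ n ∣ 10 ∨ n ∣ 12 := by
  have key : ∀ m ≤ 120, m ∣ 120 → φ m ≤ 4 → m ∣ 8 ∨ m ∣ 10 ∨ m ∣ 12 := by decide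
  have hdvd := Nat.dvd_120_of_totient_le_four hn h
  exact key n (Nat.le_of_dvd (by norm_num) hdvd) hdvd h

theorem Nat.dvd_twelve_of_totient_le_two {n : ℕ} (hn : 0 < n) (h : φ n ≤ 2) : n ∣ 12 := by
  have key : ∀ m ≤ 120, m ∣ 120 → φ m ≤ 2 → m ∣ 12 := by decide
  have hdvd := Nat.dvd_120_of_totient_le_four hn (h.trans (by norm_num))
  exact key n (Nat.le_of_dvd (by norm_num) hdvd) hdvd h

namespace IsRootOfUnity

variable {z w : ℂ}

theorem isOfFinOrder (h : IsRootOfUnity z) : IsOfFinOrder z :=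
  isOfFinOrder_iff_pow_eq_one.2 h

theorem norm_eq_one (h : IsRootOfUnity z) : ‖z‖ = 1 := by
  obtain ⟨n, hn, hz⟩ := h
  exact Complex.norm_eq_one_of_pow_eq_one hz hn.ne'

theorem ne_zero (h : IsRootOfUnity z) : z ≠ 0 :=
  norm_ne_zero_iff.1 (by simp [h.norm_eq_one])

theorem mul_conj_self (h : IsRootOfUnity z) : z * conj z = 1 := by
  rw [← Complex.inv_eq_conj h.norm_eq_one, mul_inv_cancel₀ h.ne_zero]

theorem starRingEnd (h : IsRootOfUnity z) : IsRootOfUnity (conj z) := by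
  obtain ⟨n, hn, hz⟩ := h
  exact ⟨n, hn, by rw [← map_pow, hz, map_one]⟩

theorem mul (hz : IsRootOfUnity z) (hw : IsRootOfUnity w) : IsRootOfUnity (z * w) := by
  obtain ⟨n, hn, hzn⟩ := hz
  obtain ⟨m, hm, hwm⟩ := hw
  exact ⟨n * m, Nat.mul_pos hn hm, by
    rw [mul_pow, pow_mul, hzn, one_pow, one_mul, pow_mul', hwm, one_pow]⟩

theorem isIntegral (h : IsRootOfUnity z) : IsIntegral ℚ z := by
  obtain ⟨n, hn, hz⟩ := h
  exact .of_pow hn (hz ▸ isIntegral_one)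

theorem natDegree_minpoly (h : IsRootOfUnity z) : (minpoly ℚ z).natDegree = φ (orderOf z) := by
  rw [← cyclotomic_eq_minpoly_rat (IsPrimitiveRoot.orderOf z) h.isOfFinOrder.orderOf_pos,
    natDegree_cyclotomic]

theorem pow_eq_one_of_natDegree_minpoly_le_four (h : IsRootOfUnity z)
    (hdeg : (minpoly ℚ z).natDegree ≤ 4) : z ^ 8 = 1 ∨ z ^ 10 = 1 ∨ z ^ 12 = 1 := by
  simp only [← orderOf_dvd_iff_pow_eq_one]
  exact Nat.dvd_eight_or_dvd_ten_or_dvd_twelve_of_totient_le_four h.isOfFinOrder.orderOf_pos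
    (h.natDegree_minpoly ▸ hdeg)

theorem pow_twelve_eq_one_of_natDegree_minpoly_le_two (h : IsRootOfUnity z)
    (hdeg : (minpoly ℚ z).natDegree ≤ 2) : z ^ 12 = 1 :=
  orderOf_dvd_iff_pow_eq_one.1 <|
    Nat.dvd_twelve_of_totient_le_two h.isOfFinOrder.orderOf_pos (h.natDegree_minpoly ▸ hdeg)

end IsRootOfUnity

theorem mem_span_one_of_sub_sq_eq_sq (d : ℝ) {y : ℝ} {u k : ℚ} (h : (y - u) ^ 2 = k ^ 2) :
    y ∈ Submodule.span ℚ {1, d} := by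
  rcases sq_eq_sq_iff_eq_or_eq_neg.1 h with h | h
  · exact Submodule.mem_span_pair.2 ⟨u + k, 0, by
      simp only [Rat.smul_def, Rat.cast_add, mul_one, zero_smul, add_zero]; linarith⟩
  · exact Submodule.mem_span_pair.2 ⟨u - k, 0, by
      simp only [Rat.smul_def, Rat.cast_sub, mul_one, zero_smul, add_zero]; linarith⟩

theorem mem_span_one_sqrt_of_sub_sq_eq_sq_mul {d y : ℝ} (hd : 0 ≤ d) {u k : ℚ}
    (h : (y - u) ^ 2 = k ^ 2 * d) : y ∈ Submodule.span ℚ {1, √d} := by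
  rw [← Real.sq_sqrt hd, ← mul_pow] at h
  rcases sq_eq_sq_iff_eq_or_eq_neg.1 h with h | h
  · exact Submodule.mem_span_pair.2 ⟨u, k, by simp only [Rat.smul_def, mul_one]; linarith⟩
  · exact Submodule.mem_span_pair.2 ⟨u, -k, by
      simp only [Rat.smul_def, mul_one, neg_smul]; linarith⟩

theorem two_mul_ofReal_re {z : ℂ} (hz : ‖z‖ = 1) : 2 * (z.re : ℂ) = z + z⁻¹ := by
  rw [Complex.inv_eq_conj hz, Complex.add_conj]; push_cast; rfl

theorem re_mem_span_sqrt_two_of_pow_eight_eq_one {z : ℂ} (h : z ^ 8 = 1) :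
    z.re ∈ Submodule.span ℚ {1, √2} := by
  have hz : z ≠ 0 := by rintro rfl; norm_num at h
  set y := z.re
  -- `(z - z⁻¹) (z⁴ - z⁻⁴)` as a polynomial in `2 y = z + z⁻¹`
  have key : (2 * y) * ((2 * y) ^ 2 - 2) * ((2 * y) ^ 2 - 4) = 0 := by
    have hz' : (((2 * y) * ((2 * y) ^ 2 - 2) * ((2 * y) ^ 2 - 4) : ℝ) : ℂ) * z ^ 5
        = (z ^ 2 - 1) * (z ^ 8 - 1) := by
      push_cast
      rw [two_mul_ofReal_re (Complex.norm_eq_one_of_pow_eq_one h (by norm_num))]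
      field_simp
      ring
    rw [h, sub_self, mul_zero] at hz'
    exact_mod_cast (mul_eq_zero.1 hz').resolve_right (pow_ne_zero _ hz)
  simp only [mul_eq_zero] at key
  rcases key with (h0 | h2) | h4
  · exact mem_span_one_of_sub_sq_eq_sq _ (u := 0) (k := 0)
      (by push_cast; linear_combination y * h0.resolve_left two_ne_zero)
  · exact mem_span_one_sqrt_of_sub_sq_eq_sq_mul (by norm_num) (u := 0) (k := 1 / 2)
      (by push_cast; linear_combination h2 / 4)
  · exact mem_span_one_of_sub_sq_eq_sq _ (u := 0) (k := 1) (by push_cast; linear_combination h4 / 4)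

theorem re_mem_span_sqrt_five_of_pow_ten_eq_one {z : ℂ} (h : z ^ 10 = 1) :
    z.re ∈ Submodule.span ℚ {1, √5} := by
  have hz : z ≠ 0 := by rintro rfl; norm_num at h
  set y := z.re
  -- `(z - z⁻¹) (z⁵ - z⁻⁵)` as a polynomial in `2 y = z + z⁻¹`
  have key : ((2 * y) ^ 2 - 4) * ((2 * y) ^ 2 - 2 * y - 1) * ((2 * y) ^ 2 + 2 * y - 1) = 0 := by
    have hz' : ((((2 * y) ^ 2 - 4) * ((2 * y) ^ 2 - 2 * y - 1) * ((2 * y) ^ 2 + 2 * y - 1) : ℝ)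
        : ℂ) * z ^ 6 = (z ^ 2 - 1) * (z ^ 10 - 1) := by
      push_cast
      rw [two_mul_ofReal_re (Complex.norm_eq_one_of_pow_eq_one h (by norm_num))]
      field_simp
      ring
    rw [h, sub_self, mul_zero] at hz'
    exact_mod_cast (mul_eq_zero.1 hz').resolve_right (pow_ne_zero _ hz)
  simp only [mul_eq_zero] at key
  rcases key with (h4 | hm) | hp
  · exact mem_span_one_of_sub_sq_eq_sq _ (u := 0) (k := 1) (by push_cast; linear_combination h4 / 4)
  · exact mem_span_one_sqrt_of_sub_sq_eq_sq_mul (by norm_num) (u := 1 / 4) (k := 1 / 4)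
      (by push_cast; linear_combination hm / 4)
  · exact mem_span_one_sqrt_of_sub_sq_eq_sq_mul (by norm_num) (u := -1 / 4) (k := 1 / 4)
      (by push_cast; linear_combination hp / 4)

theorem re_mem_span_sqrt_three_of_pow_twelve_eq_one {z : ℂ} (h : z ^ 12 = 1) :
    z.re ∈ Submodule.span ℚ {1, √3} := by
  have hz : z ≠ 0 := by rintro rfl; norm_num at h
  set y := z.re
  -- `(z - z⁻¹) (z⁶ - z⁻⁶)` as a polynomial in `2 y = z + z⁻¹`
  have key : (2 * y) * ((2 * y) ^ 2 - 1) * ((2 * y) ^ 2 - 3) * ((2 * y) ^ 2 - 4) = 0 := by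
    have hz' : (((2 * y) * ((2 * y) ^ 2 - 1) * ((2 * y) ^ 2 - 3) * ((2 * y) ^ 2 - 4) : ℝ) : ℂ)
        * z ^ 7 = (z ^ 2 - 1) * (z ^ 12 - 1) := by
      push_cast
      rw [two_mul_ofReal_re (Complex.norm_eq_one_of_pow_eq_one h (by norm_num))]
      field_simp
      ring
    rw [h, sub_self, mul_zero] at hz'
    exact_mod_cast (mul_eq_zero.1 hz').resolve_right (pow_ne_zero _ hz)
  simp only [mul_eq_zero] at key
  rcases key with ((h0 | h1) | h3) | h4
  · exact mem_span_one_of_sub_sq_eq_sq _ (u := 0) (k := 0)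
      (by push_cast; linear_combination y * h0.resolve_left two_ne_zero)
  · exact mem_span_one_of_sub_sq_eq_sq _ (u := 0) (k := 1 / 2)
      (by push_cast; linear_combination h1 / 4)
  · exact mem_span_one_sqrt_of_sub_sq_eq_sq_mul (by norm_num) (u := 0) (k := 1 / 2)
      (by push_cast; linear_combination h3 / 4)
  · exact mem_span_one_of_sub_sq_eq_sq _ (u := 0) (k := 1) (by push_cast; linear_combination h4 / 4)

theorem im_mem_span_sqrt_two_of_pow_eight_eq_one {z : ℂ} (h : z ^ 8 = 1) :
    z.im ∈ Submodule.span ℚ {1, √2} := by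
  simpa using re_mem_span_sqrt_two_of_pow_eight_eq_one (z := -Complex.I * z)
    (by rw [mul_pow, h, mul_one, show 8 = 4 * 2 by rfl, pow_mul, neg_pow, Complex.I_pow_four]
        norm_num)

theorem im_mem_span_sqrt_three_of_pow_twelve_eq_one {z : ℂ} (h : z ^ 12 = 1) :
    z.im ∈ Submodule.span ℚ {1, √3} := by
  simpa using re_mem_span_sqrt_three_of_pow_twelve_eq_one (z := -Complex.I * z)
    (by rw [mul_pow, h, mul_one, show 12 = 4 * 3 by rfl, pow_mul, neg_pow, Complex.I_pow_four]
        norm_num)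

theorem adjoin_ofReal_eq_bot_or_eq_of_mem_span {x y : ℝ} (hx : x ∈ Submodule.span ℚ {1, y}) :
    ℚ⟮(x : ℂ)⟯ = ⊥ ∨ ℚ⟮(x : ℂ)⟯ = ℚ⟮(y : ℂ)⟯ := by
  obtain ⟨u, v, rfl⟩ := Submodule.mem_span_pair.1 hx
  by_cases hv : v = 0
  · left
    rw [adjoin_simple_eq_bot_iff]
    simp [hv, Rat.smul_def, SubfieldClass.ratCast_mem (⊥ : IntermediateField ℚ ℂ) u]
  · right
    convert adjoin_simple_algebraMap_add_mul (u := u) hv (y : ℂ) using 3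
    simp [Rat.smul_def]

namespace IsRootOfUnity

variable {z : ℂ}

theorem adjoin_re_eq (hz : IsRootOfUnity z) (hdeg : (minpoly ℚ z).natDegree ≤ 4) :
    ℚ⟮(z.re : ℂ)⟯ = ⊥ ∨ ℚ⟮(z.re : ℂ)⟯ = ℚ⟮((√2 : ℝ) : ℂ)⟯ ∨
      ℚ⟮(z.re : ℂ)⟯ = ℚ⟮((√3 : ℝ) : ℂ)⟯ ∨ ℚ⟮(z.re : ℂ)⟯ = ℚ⟮((√5 : ℝ) : ℂ)⟯ := by
  rcases hz.pow_eq_one_of_natDegree_minpoly_le_four hdeg with h | h | h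
  · rcases adjoin_ofReal_eq_bot_or_eq_of_mem_span (re_mem_span_sqrt_two_of_pow_eight_eq_one h)
      with h | h <;> simp [h]
  · rcases adjoin_ofReal_eq_bot_or_eq_of_mem_span (re_mem_span_sqrt_five_of_pow_ten_eq_one h)
      with h | h <;> simp [h]
  · rcases adjoin_ofReal_eq_bot_or_eq_of_mem_span (re_mem_span_sqrt_three_of_pow_twelve_eq_one h)
      with h | h <;> simp [h]

theorem natDegree_minpoly_le_of_re_mem (hz : IsRootOfUnity z) {F : IntermediateField ℚ ℂ}
    [FiniteDimensional ℚ F] (hre : (z.re : ℂ) ∈ F) :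
    (minpoly ℚ z).natDegree ≤ finrank ℚ F * 2 := by
  let x : F := ⟨z.re + z.re, add_mem hre hre⟩
  have hP : (X ^ 2 - C x * X + 1 : F[X]).natDegree = 2 := by compute_degree!
  calc (minpoly ℚ z).natDegree ≤ finrank ℚ F * (X ^ 2 - C x * X + 1 : F[X]).natDegree :=
        natDegree_minpoly_le_finrank_mul F (ne_zero_of_natDegree_gt (n := 1) (by omega)) (by
          have h2re : (z.re : ℂ) + z.re = z + conj z := by rw [Complex.add_conj]; push_cast; ring
          simp only [map_add, map_sub, map_mul, aeval_X_pow, aeval_C, aeval_X, map_one,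
            IntermediateField.algebraMap_apply, x, h2re]
          linear_combination -hz.mul_conj_self)
    _ = finrank ℚ F * 2 := by rw [hP]

theorem adjoin_re_eq_bot_or_of_re_mem (hz : IsRootOfUnity z) {F : IntermediateField ℚ ℂ}
    [FiniteDimensional ℚ F] (hF : finrank ℚ F = 2) (hre : (z.re : ℂ) ∈ F) :
    ℚ⟮(z.re : ℂ)⟯ = ⊥ ∨ F = ℚ⟮((√2 : ℝ) : ℂ)⟯ ∨ F = ℚ⟮((√3 : ℝ) : ℂ)⟯ ∨
      F = ℚ⟮((√5 : ℝ) : ℂ)⟯ := by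
  rcases adjoin_simple_eq_bot_or_eq_of_mem (hF ▸ Nat.prime_two) hre with h | rfl
  · exact Or.inl h
  · exact hz.adjoin_re_eq ((hz.natDegree_minpoly_le_of_re_mem hre).trans (by rw [hF]))

end IsRootOfUnity

theorem add_conj_eq_and_mul_conj_eq {α : ℂ} {p q : ℚ} (hpq : α ^ 2 + p * α + q = 0)
    (hnonreal : conj α ≠ α) : α + conj α = -p ∧ α * conj α = q := by
  have hpq' : conj α ^ 2 + p * conj α + q = 0 := by simpa using congrArg conj hpq
  have : (α - conj α) * (α + conj α + p) = 0 := by linear_combination hpq - hpq'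
  have hsum : α + conj α = -p := by
    linear_combination (mul_eq_zero.1 this).resolve_left (sub_ne_zero.2 (Ne.symm hnonreal))
  exact ⟨hsum, by linear_combination α * hsum - hpq⟩

theorem natDegree_minpoly_le_two_of_add_conj_eq {z : ℂ} {r s : ℚ} (hr : z + conj z = r)
    (hs : z * conj z = s) : (minpoly ℚ z).natDegree ≤ 2 := by
  have hP : (X ^ 2 - C r * X + C s : ℚ[X]).natDegree = 2 := by compute_degree!
  refine hP ▸ natDegree_le_natDegree (minpoly.degree_le_of_ne_zero ℚ z
    (ne_zero_of_natDegree_gt (n := 1) (by omega)) ?_)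
  simp only [map_add, map_sub, map_mul, aeval_X_pow, aeval_C, aeval_X, eq_ratCast]
  linear_combination z * hr - hs

theorem natDegree_minpoly_le_of_eq_mul {α c z : ℂ} {p q : ℚ} (hpq : α ^ 2 + p * α + q = 0)
    (hα : α = c * z) {F : IntermediateField ℚ ℂ} [FiniteDimensional ℚ F] (hc : c ∈ F)
    (hc0 : c ≠ 0) : (minpoly ℚ z).natDegree ≤ finrank ℚ F * 2 := by
  let c' : F := ⟨c, hc⟩
  have hc' : c' ≠ 0 := fun h => hc0 (congrArg Subtype.val h)
  have hP : (C (c' ^ 2) * X ^ 2 + C (p * c') * X + C (q : F)).natDegree = 2 := by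
    compute_degree!
  calc (minpoly ℚ z).natDegree
      ≤ finrank ℚ F * (C (c' ^ 2) * X ^ 2 + C (p * c') * X + C (q : F)).natDegree :=
        natDegree_minpoly_le_finrank_mul F (ne_zero_of_natDegree_gt (n := 1) (by omega)) (by
          rw [hα] at hpq
          simp only [map_add, map_mul, map_pow, aeval_C, aeval_X, map_ratCast,
            IntermediateField.algebraMap_apply, SubmonoidClass.mk_pow, c']
          linear_combination hpq)
    _ = finrank ℚ F * 2 := by rw [hP]

theorem pow_eight_and_pow_eight_or_pow_twelve_and_pow_twelve_or_sq_eq_one {M : Type*}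
    [CommMonoid M] {w θ : M} (hw : w ^ 12 = 1) (hθ : θ ^ 8 = 1 ∨ θ ^ 10 = 1 ∨ θ ^ 12 = 1)
    (hwθ : (w * θ) ^ 8 = 1 ∨ (w * θ) ^ 10 = 1 ∨ (w * θ) ^ 12 = 1) :
    ((w * θ) ^ 8 = 1 ∧ θ ^ 8 = 1) ∨ ((w * θ) ^ 12 = 1 ∧ θ ^ 12 = 1) ∨ w ^ 2 = 1 := by
  have hpow {x : M} {m : ℕ} (k : ℕ) (h : x ^ m = 1) : x ^ (m * k) = 1 := by
    rw [pow_mul, h, one_pow]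
  have hw_pow {n : ℕ} (hθn : θ ^ n = 1) (hwθn : (w * θ) ^ n = 1) : w ^ Nat.gcd n 12 = 1 :=
    pow_gcd_eq_one.2 ⟨by rwa [mul_pow, hθn, mul_one] at hwθn, hw⟩
  have h12 : (w * θ) ^ 12 = θ ^ 12 := by rw [mul_pow, hw, one_mul]
  have h8 (hw4 : w ^ 4 = 1) : (w * θ) ^ 8 = θ ^ 8 := by rw [mul_pow, hpow 2 hw4, one_mul]
  rcases hθ with hθ | hθ | hθ
  · rcases hwθ with hwθ | hwθ | hwθ
    · exact Or.inl ⟨hwθ, hθ⟩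
    · have hw4 : w ^ 4 = 1 := hw_pow (n := 40) (hpow 5 hθ) (hpow 4 hwθ)
      exact Or.inl ⟨(h8 hw4).trans hθ, hθ⟩
    · exact Or.inr (Or.inl ⟨hwθ, h12 ▸ hwθ⟩)
  · rcases hwθ with hwθ | hwθ | hwθ
    · have hw4 : w ^ 4 = 1 := hw_pow (n := 40) (hpow 4 hθ) (hpow 5 hwθ)
      exact Or.inl ⟨hwθ, (h8 hw4) ▸ hwθ⟩
    · exact Or.inr (Or.inr (hw_pow hθ hwθ))
    · exact Or.inr (Or.inl ⟨hwθ, h12 ▸ hwθ⟩)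
  · exact Or.inr (Or.inl ⟨h12.trans hθ, hθ⟩)

theorem IsRootOfUnity.pow_eight_and_pow_eight_or_pow_twelve_and_pow_twelve {w θ : ℂ}
    (hw : IsRootOfUnity w) (hθ : IsRootOfUnity θ) (hw_deg : (minpoly ℚ w).natDegree ≤ 2)
    (hθ_deg : (minpoly ℚ θ).natDegree ≤ (minpoly ℚ w).natDegree * 2)
    (hwθ_deg : (minpoly ℚ (w * θ)).natDegree ≤ (minpoly ℚ w).natDegree * 2) :
    ((w * θ) ^ 8 = 1 ∧ θ ^ 8 = 1) ∨ ((w * θ) ^ 12 = 1 ∧ θ ^ 12 = 1) := by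
  have hw12 := hw.pow_twelve_eq_one_of_natDegree_minpoly_le_two hw_deg
  rcases pow_eight_and_pow_eight_or_pow_twelve_and_pow_twelve_or_sq_eq_one hw12
    (hθ.pow_eq_one_of_natDegree_minpoly_le_four (by omega))
    ((hw.mul hθ).pow_eq_one_of_natDegree_minpoly_le_four (by omega)) with h | h | hw2
  · exact Or.inl h
  · exact Or.inr h
  -- `w = ± 1` is rational, so `θ` has degree at most `2`
  have hw_rat : (minpoly ℚ w).natDegree = 1 := by
    have : (w - 1) * (w + 1) = 0 := by linear_combination hw2
    refine minpoly.natDegree_eq_one_iff.2 ?_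
    rcases mul_eq_zero.1 this with h | h
    · exact ⟨1, by simp [sub_eq_zero.1 h]⟩
    · exact ⟨-1, by simp [eq_neg_of_add_eq_zero_left h]⟩
  have hθ12 := hθ.pow_twelve_eq_one_of_natDegree_minpoly_le_two (by omega)
  exact Or.inr ⟨by rw [mul_pow, hw12, hθ12, one_mul], hθ12⟩

theorem eq_ratCast_or_eq_ratCast_mul_of_mem_span {s y : ℝ} (hs : Irrational s) {d c : ℚ}
    (hsd : s ^ 2 = d) (hy : y ∈ Submodule.span ℚ {1, s}) (hyc : y ^ 2 = c) :
    (∃ u : ℚ, y = u) ∨ ∃ v : ℚ, y = v * s := by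
  obtain ⟨u, v, rfl⟩ := Submodule.mem_span_pair.1 hy
  simp only [Rat.smul_def, mul_one] at hyc ⊢
  by_cases hu : u = 0
  · exact Or.inr ⟨v, by simp [hu]⟩
  by_cases hv : v = 0
  · exact Or.inl ⟨u, by simp [hv]⟩
  exfalso
  refine hs ⟨(c - u ^ 2 - v ^ 2 * d) / (2 * u * v), ?_⟩
  rw [Rat.cast_div, div_eq_iff (by exact_mod_cast mul_ne_zero (mul_ne_zero two_ne_zero hu) hv)]
  push_cast
  linear_combination -hyc + (v : ℝ) ^ 2 * hsd

theorem adjoin_eq_of_im_mem_span {α : ℂ} {s : ℝ} (hs : Irrational s) {d : ℚ} (hsd : s ^ 2 = d)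
    {u c : ℚ} (hre : α.re = u) (him : α.im ∈ Submodule.span ℚ {1, s}) (himc : α.im ^ 2 = c)
    (him0 : α.im ≠ 0) : ℚ⟮α⟯ = ℚ⟮Complex.I⟯ ∨ ℚ⟮α⟯ = ℚ⟮Complex.I * (s : ℂ)⟯ := by
  have hα : α = algebraMap ℚ ℂ u + algebraMap ℚ ℂ 1 * (Complex.I * α.im) := by
    apply Complex.ext <;> simp [hre]
  rw [hα, adjoin_simple_algebraMap_add_mul one_ne_zero]
  rcases eq_ratCast_or_eq_ratCast_mul_of_mem_span hs hsd him himc with ⟨u', hu'⟩ | ⟨v, hv⟩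
  · have hu'0 : u' ≠ 0 := by rintro rfl; exact him0 (by simpa using hu')
    have : Complex.I * α.im = algebraMap ℚ ℂ 0 + algebraMap ℚ ℂ u' * Complex.I := by
      simp [hu', mul_comm]
    rw [this, adjoin_simple_algebraMap_add_mul hu'0]
    exact Or.inl rfl
  · have hv0 : v ≠ 0 := by rintro rfl; exact him0 (by simpa using hv)
    have : Complex.I * α.im = algebraMap ℚ ℂ 0 + algebraMap ℚ ℂ v * (Complex.I * s) := by
      rw [hv, map_zero, zero_add, eq_ratCast]
      push_cast
      ring
    rw [this, adjoin_simple_algebraMap_add_mul hv0]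
    exact Or.inr rfl

section

variable {a b : ℚ} {η θ α : ℂ}

theorem re_mem_adjoin_of_conj_eq (ha : a ≠ 0) (hb : b ≠ 0) (hη : IsRootOfUnity η)
    (hθ : IsRootOfUnity θ) (hα : α = a * η + b * θ) (hα0 : α ≠ 0) (hreal : conj α = α) :
    (η.re : ℂ) ∈ ℚ⟮α⟯ ∧ (θ.re : ℂ) ∈ ℚ⟮α⟯ := by
  have hαF : α ∈ ℚ⟮α⟯ := mem_adjoin_simple_self ℚ α
  have hconj : α = a * conj η + b * conj θ := by rw [← hreal, hα]; simp
  -- `α (a η - b conj θ) = a² - b²`, and `a η - b conj θ` is `2 a Re η - α = α - 2 b Re θ`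
  have hγ : a * η - b * conj θ = ((a ^ 2 - b ^ 2 : ℚ) : ℂ) / α := by
    rw [eq_div_iff hα0]
    push_cast
    linear_combination (a * η - b * conj θ) * hα + (a * η) * (hα.symm.trans hconj)
      + (a : ℂ) ^ 2 * hη.mul_conj_self - (b : ℂ) ^ 2 * hθ.mul_conj_self
  have hγF : ((a ^ 2 - b ^ 2 : ℚ) : ℂ) / α ∈ ℚ⟮α⟯ := div_mem (SubfieldClass.ratCast_mem _ _) hαF
  have hreη : (η.re : ℂ) = (α + ((a ^ 2 - b ^ 2 : ℚ) : ℂ) / α) / ((2 * a : ℚ) : ℂ) := by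
    rw [← hγ, eq_div_iff (by exact_mod_cast mul_ne_zero two_ne_zero ha), Complex.re_eq_add_conj]
    push_cast
    linear_combination -hconj
  have hreθ : (θ.re : ℂ) = (α - ((a ^ 2 - b ^ 2 : ℚ) : ℂ) / α) / ((2 * b : ℚ) : ℂ) := by
    rw [← hγ, eq_div_iff (by exact_mod_cast mul_ne_zero two_ne_zero hb), Complex.re_eq_add_conj]
    push_cast
    linear_combination -hα
  rw [hreη, hreθ]
  exact ⟨div_mem (add_mem hαF hγF) (SubfieldClass.ratCast_mem _ _),
    div_mem (sub_mem hαF hγF) (SubfieldClass.ratCast_mem _ _)⟩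

theorem adjoin_eq_of_conj_eq (ha : a ≠ 0) (hb : b ≠ 0) (hη : IsRootOfUnity η)
    (hθ : IsRootOfUnity θ) (hα : α = a * η + b * θ) (hF : finrank ℚ ℚ⟮α⟯ = 2)
    (hreal : conj α = α) :
    ℚ⟮α⟯ = ⊥ ∨ ℚ⟮α⟯ = ℚ⟮((√2 : ℝ) : ℂ)⟯ ∨ ℚ⟮α⟯ = ℚ⟮((√3 : ℝ) : ℂ)⟯ ∨
      ℚ⟮α⟯ = ℚ⟮((√5 : ℝ) : ℂ)⟯ := by
  have : FiniteDimensional ℚ ℚ⟮α⟯ := Module.finite_of_finrank_eq_succ hF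
  have hα0 : α ≠ 0 := by
    rintro rfl
    rw [adjoin_simple_eq_bot_iff.2 (zero_mem _), IntermediateField.finrank_bot] at hF
    norm_num at hF
  obtain ⟨hreη, hreθ⟩ := re_mem_adjoin_of_conj_eq ha hb hη hθ hα hα0 hreal
  rcases hη.adjoin_re_eq_bot_or_of_re_mem hF hreη with hη' | h
  · rcases hθ.adjoin_re_eq_bot_or_of_re_mem hF hreθ with hθ' | h
    · have hα_re : α = a * η.re + b * θ.re := by
        have hconj : conj α = a * conj η + b * conj θ := by rw [hα]; simp
        rw [Complex.re_eq_add_conj, Complex.re_eq_add_conj]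
        linear_combination (hα + hreal.symm.trans hconj) / 2
      rw [adjoin_simple_eq_bot_iff] at hη' hθ' ⊢
      rw [hα_re]
      exact Or.inl (add_mem (mul_mem (SubfieldClass.ratCast_mem _ a) hη')
        (mul_mem (SubfieldClass.ratCast_mem _ b) hθ'))
    · exact Or.inr h
  · exact Or.inr h

theorem pow_eight_and_pow_eight_or_pow_twelve_and_pow_twelve_of_conj_ne (ha : a ≠ 0)
    (hb : b ≠ 0) (hη : IsRootOfUnity η) (hθ : IsRootOfUnity θ) (hα : α = a * η + b * θ)
    {p q : ℚ} (hpq : α ^ 2 + p * α + q = 0) (hnonreal : conj α ≠ α) :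
    (η ^ 8 = 1 ∧ θ ^ 8 = 1) ∨ (η ^ 12 = 1 ∧ θ ^ 12 = 1) := by
  have hα0 : α ≠ 0 := fun h => hnonreal (by simp [h])
  obtain ⟨w, hw_def⟩ : ∃ w, w = η * conj θ := ⟨_, rfl⟩
  have hw : IsRootOfUnity w := hw_def ▸ hη.mul hθ.starRingEnd
  have hwθ : w * θ = η := by rw [hw_def]; linear_combination η * hθ.mul_conj_self
  -- `α conj α = a² + b² + a b (w + conj w)` is rational
  set r : ℚ := (q - a ^ 2 - b ^ 2) / (a * b)
  have hr : w + conj w = r := by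
    have hprod := (add_conj_eq_and_mul_conj_eq hpq hnonreal).2
    rw [Rat.cast_div, eq_div_iff (by exact_mod_cast mul_ne_zero ha hb)]
    simp only [hα, map_add, map_mul, map_ratCast] at hprod
    simp only [hw_def, map_mul, Complex.conj_conj]
    push_cast
    linear_combination hprod - (a : ℂ) ^ 2 * hη.mul_conj_self - (b : ℂ) ^ 2 * hθ.mul_conj_self
  have : FiniteDimensional ℚ ℚ⟮w⟯ := adjoin.finiteDimensional hw.isIntegral
  have hE : finrank ℚ ℚ⟮w⟯ = (minpoly ℚ w).natDegree := adjoin.finrank hw.isIntegral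
  have hwE : w ∈ ℚ⟮w⟯ := mem_adjoin_simple_self ℚ w
  -- `α = (a w + b) θ = (a + b conj w) η`, with both coefficients in `ℚ(w)`
  have hθ_deg : (minpoly ℚ θ).natDegree ≤ (minpoly ℚ w).natDegree * 2 := by
    have hc : α = (a * w + b) * θ := by rw [hα, add_mul, mul_assoc, hwθ]
    refine (natDegree_minpoly_le_of_eq_mul hpq hc ?_ ?_).trans_eq (by rw [hE])
    · exact add_mem (mul_mem (SubfieldClass.ratCast_mem _ a) hwE) (SubfieldClass.ratCast_mem _ b)
    · exact fun h => hα0 (by rw [hc, h, zero_mul])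
  have hη_deg : (minpoly ℚ η).natDegree ≤ (minpoly ℚ w).natDegree * 2 := by
    have hc : α = (a + b * (r - w)) * η := by
      rw [hα, ← hr, add_sub_cancel_left, hw_def]
      simp only [map_mul, Complex.conj_conj]
      linear_combination -(b : ℂ) * θ * hη.mul_conj_self
    refine (natDegree_minpoly_le_of_eq_mul hpq hc ?_ ?_).trans_eq (by rw [hE])
    · exact add_mem (SubfieldClass.ratCast_mem _ a)
        (mul_mem (SubfieldClass.ratCast_mem _ b) (sub_mem (SubfieldClass.ratCast_mem _ r) hwE))
    · exact fun h => hα0 (by rw [hc, h, zero_mul])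
  rw [← hwθ] at hη_deg ⊢
  exact hw.pow_eight_and_pow_eight_or_pow_twelve_and_pow_twelve hθ
    (natDegree_minpoly_le_two_of_add_conj_eq hr (s := 1) (by simpa using hw.mul_conj_self))
    hθ_deg hη_deg

theorem adjoin_eq_of_conj_ne (ha : a ≠ 0) (hb : b ≠ 0) (hη : IsRootOfUnity η)
    (hθ : IsRootOfUnity θ) (hα : α = a * η + b * θ) {p q : ℚ}
    (hpq : α ^ 2 + p * α + q = 0) (hnonreal : conj α ≠ α) :
    ℚ⟮α⟯ = ℚ⟮Complex.I⟯ ∨ ℚ⟮α⟯ = ℚ⟮Complex.I * ((√2 : ℝ) : ℂ)⟯ ∨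
      ℚ⟮α⟯ = ℚ⟮Complex.I * ((√3 : ℝ) : ℂ)⟯ := by
  obtain ⟨hsum, hprod⟩ := add_conj_eq_and_mul_conj_eq hpq hnonreal
  have hre : α.re = ((-p / 2 : ℚ) : ℝ) := by
    have := congrArg Complex.re hsum
    simp only [Complex.add_re, Complex.conj_re, Complex.neg_re, Complex.ratCast_re] at this
    push_cast
    linarith
  have himc : α.im ^ 2 = ((q - p ^ 2 / 4 : ℚ) : ℝ) := by
    have := congrArg Complex.re hprod
    simp only [Complex.mul_conj, Complex.normSq_apply, Complex.ofReal_re, Complex.ratCast_re,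
      hre] at this
    push_cast at this ⊢
    linear_combination this
  have him0 : α.im ≠ 0 := fun h => hnonreal (Complex.conj_eq_iff_im.2 h)
  have him : α.im = a • η.im + b • θ.im := by simp [hα, Rat.smul_def]
  rcases pow_eight_and_pow_eight_or_pow_twelve_and_pow_twelve_of_conj_ne ha hb hη hθ hα hpq
    hnonreal with ⟨hη8, hθ8⟩ | ⟨hη12, hθ12⟩
  · have hmem : α.im ∈ Submodule.span ℚ {1, √2} := him ▸ add_mem
      (Submodule.smul_mem _ _ (im_mem_span_sqrt_two_of_pow_eight_eq_one hη8))
      (Submodule.smul_mem _ _ (im_mem_span_sqrt_two_of_pow_eight_eq_one hθ8))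
    rcases adjoin_eq_of_im_mem_span irrational_sqrt_two (d := 2) (by simp) hre hmem himc him0
      with h | h <;> simp [h]
  · have hmem : α.im ∈ Submodule.span ℚ {1, √3} := him ▸ add_mem
      (Submodule.smul_mem _ _ (im_mem_span_sqrt_three_of_pow_twelve_eq_one hη12))
      (Submodule.smul_mem _ _ (im_mem_span_sqrt_three_of_pow_twelve_eq_one hθ12))
    rcases adjoin_eq_of_im_mem_span (by simpa using Nat.prime_three.irrational_sqrt) (d := 3)
      (by simp) hre hmem himc him0 with h | h <;> simp [h]

end

/-- If `a, b` are non-zero rationals and `η, θ` roots of unity such that `α = aη + bθ` has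
degree 1 or 2 over `ℚ`, then `ℚ(α)` is one of
`ℚ, ℚ(i), ℚ(√-2), ℚ(√-3), ℚ(√2), ℚ(√3), ℚ(√5)`. -/
theorem field_of_quadratic_combination (a b : ℚ) (ha : a ≠ 0) (hb : b ≠ 0)
    (η θ : ℂ) (hη : IsRootOfUnity η) (hθ : IsRootOfUnity θ)
    (hdeg : (minpoly ℚ ((a : ℂ) * η + (b : ℂ) * θ)).natDegree = 1 ∨
      (minpoly ℚ ((a : ℂ) * η + (b : ℂ) * θ)).natDegree = 2) :
    IntermediateField.adjoin ℚ {(a : ℂ) * η + (b : ℂ) * θ} = ⊥ ∨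
    IntermediateField.adjoin ℚ {(a : ℂ) * η + (b : ℂ) * θ} =
      IntermediateField.adjoin ℚ {Complex.I} ∨
    IntermediateField.adjoin ℚ {(a : ℂ) * η + (b : ℂ) * θ} =
      IntermediateField.adjoin ℚ {Complex.I * ((Real.sqrt 2 : ℝ) : ℂ)} ∨
    IntermediateField.adjoin ℚ {(a : ℂ) * η + (b : ℂ) * θ} =
      IntermediateField.adjoin ℚ {Complex.I * ((Real.sqrt 3 : ℝ) : ℂ)} ∨
    IntermediateField.adjoin ℚ {(a : ℂ) * η + (b : ℂ) * θ} =
      IntermediateField.adjoin ℚ {((Real.sqrt 2 : ℝ) : ℂ)} ∨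
    IntermediateField.adjoin ℚ {(a : ℂ) * η + (b : ℂ) * θ} =
      IntermediateField.adjoin ℚ {((Real.sqrt 3 : ℝ) : ℂ)} ∨
    IntermediateField.adjoin ℚ {(a : ℂ) * η + (b : ℂ) * θ} =
      IntermediateField.adjoin ℚ {((Real.sqrt 5 : ℝ) : ℂ)} := by
  have hint : IsIntegral ℚ ((a : ℂ) * η + b * θ) :=
    ((isIntegral_algebraMap (x := a)).mul hη.isIntegral).add
      ((isIntegral_algebraMap (x := b)).mul hθ.isIntegral)
  rcases hdeg with h1 | h2
  · exact Or.inl (adjoin_simple_eq_bot_iff.2 (minpoly.natDegree_eq_one_iff.1 h1))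
  by_cases hreal : conj ((a : ℂ) * η + b * θ) = (a : ℂ) * η + b * θ
  · have hF := (adjoin.finrank hint).trans h2
    rcases adjoin_eq_of_conj_eq ha hb hη hθ rfl hF hreal with h | h | h | h <;> simp [h]
  · obtain ⟨p, q, hpq⟩ := minpoly.exists_sq_add_mul_add_eq_zero hint h2
    rcases adjoin_eq_of_conj_ne ha hb hη hθ rfl (by simpa using hpq) hreal with h | h | h <;>
      simp [h]
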